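/- If d is a divisor of degree strictly greater than 2g − 2 on a connected weightless loopless multigraph G of genus g, then r_G(d) = deg(d) − g. -/

import Mathlib

open Finset

section Preliminaries

variable {V : Type} [Fintype V] [DecidableEq V]

/-- The degree of a divisor on a graph with vertex set `V`. -/
def degDiv (d : V → ℤ) : ℤ := ∑ v, d v

/-- A divisor is effective if it is nonnegative at every vertex. -/
def Effective (d : V → ℤ) : Prop := ∀ v, 0 ≤ d v

/-- The principal divisor `t_Z` associated to a subset `Z` of vertices, for the
graph with edge multiplicity function `m`. -/
def tZ (m : V → V → ℕ) (Z : Finset V) : V → ℤ := fun v =>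
  if v ∈ Z then -(∑ u ∈ Zᶜ, (m v u : ℤ)) else ∑ u ∈ Z, (m v u : ℤ)

/-- Two divisors are linearly equivalent if their difference lies in the subgroup
generated by the divisors `t_Z`. -/
def LinEquiv (m : V → V → ℕ) (d d' : V → ℤ) : Prop :=
  d - d' ∈ AddSubgroup.closure (Set.range (tZ m))

/-- The simple graph associated to an edge multiplicity function `m`
(an edge between distinct `u`, `v` whenever `m u v > 0`; loops are discarded). -/
def assocGraph (m : V → V → ℕ) : SimpleGraph V where
  Adj u v := u ≠ v ∧ (0 < m u v ∨ 0 < m v u)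
  symm := ⟨fun _ _ h => ⟨h.1.symm, h.2.symm⟩⟩
  loopless := ⟨fun _ h => h.1 rfl⟩

end Preliminaries

section Rank

variable {V : Type} [Fintype V] [DecidableEq V]

/-- The set of integers `k` such that either `k = -1`, or `k ≥ 0` and for every
effective divisor `e` of degree `k`, the divisor `d - e` is linearly equivalent
to an effective divisor. -/
def bnRankSet (m : V → V → ℕ) (d : V → ℤ) : Set ℤ :=
  {k : ℤ | k = -1 ∨ (0 ≤ k ∧ ∀ e : V → ℤ, Effective e → degDiv e = k →
      ∃ f : V → ℤ, Effective f ∧ LinEquiv m (d - e) f)}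

/-- The Baker–Norine rank of a divisor `d` on the weightless loopless multigraph
with edge multiplicity function `m`. -/
noncomputable def bnRank (m : V → V → ℕ) (d : V → ℤ) : ℤ := sSup (bnRankSet m d)

end Rank

section Genus

variable {V : Type} [Fintype V] [DecidableEq V]

/-- The genus of a weightless loopless multigraph: `|E| - |V| + 1` where
`|E| = (1/2) ∑_{u,v} m u v`. -/
def genus (m : V → V → ℕ) : ℤ :=
  (∑ u, ∑ v, (m u v : ℤ)) / 2 - Fintype.card V + 1

/-- The canonical divisor of a weightless loopless multigraph:
`k_G(v) = val(v) - 2`. -/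
def canonical (m : V → V → ℕ) : V → ℤ := fun v => (∑ u, (m v u : ℤ)) - 2

end Genus

/-!
Every divisor of degree at least `g` is equivalent to an effective one: take a `q`-reduced
representative (it exists because legal firings strictly decrease a potential built from a
strictly superharmonic function); Dhar's burning argument bounds its degree away from `q` by `g`.
This gives `r(d) ≥ deg d - g`. Conversely, the divisor `ν` of an acyclic orientation has degree
`g - 1` and is not equivalent to any effective divisor; an effective `e ∼ d - ν` has degree
`deg d - g + 1` and `d - e ∼ ν`, so `r(d) < deg d - g + 1`.
-/

section Laplacian

variable {V : Type} [Fintype V]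

/-- The negative of the usual graph Laplacian `D - A`, normalised so that `tZ m Z` is the image
of the indicator function of `Z`. -/
def laplacian (m : V → V → ℕ) : (V → ℤ) →+ (V → ℤ) where
  toFun σ v := ∑ u, (m v u : ℤ) * (σ u - σ v)
  map_zero' := by ext; simp
  map_add' σ τ := by ext v; simp only [Pi.add_apply, ← sum_add_distrib]; congr 1; ext u; ring

lemma laplacian_apply (m : V → V → ℕ) (σ : V → ℤ) (v : V) :
    laplacian m σ v = ∑ u, (m v u : ℤ) * (σ u - σ v) := rfl

variable {m : V → V → ℕ}

lemma degDiv_sub (d d' : V → ℤ) : degDiv (d - d') = degDiv d - degDiv d' :=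
  sum_sub_distrib ..

lemma degDiv_add (d d' : V → ℤ) : degDiv (d + d') = degDiv d + degDiv d' :=
  sum_add_distrib

lemma sum_laplacian_mul (hsymm : ∀ u v, m u v = m v u) (σ τ : V → ℤ) :
    ∑ v, laplacian m σ v * τ v = ∑ v, σ v * laplacian m τ v := by
  simp only [laplacian_apply, sum_mul, mul_sum, mul_sub, sub_mul, sum_sub_distrib]
  rw [sum_comm (f := fun v u => (m v u : ℤ) * σ u * τ v)]
  congr 1 <;> refine sum_congr rfl fun v _ => sum_congr rfl fun u _ => ?_
  · rw [hsymm]; ring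
  · ring

lemma degDiv_laplacian (hsymm : ∀ u v, m u v = m v u) (σ : V → ℤ) :
    degDiv (laplacian m σ) = 0 := by
  simpa [degDiv, laplacian_apply] using sum_laplacian_mul hsymm σ 1

end Laplacian

section LinearEquivalence

variable {V : Type} [Fintype V] [DecidableEq V]

lemma tZ_eq_laplacian_indicator (m : V → V → ℕ) (Z : Finset V) :
    tZ m Z = laplacian m (Set.indicator Z 1) := by
  ext v
  by_cases hv : v ∈ Z
  · simp only [tZ, hv, if_true, laplacian_apply, Set.indicator_of_mem (mem_coe.2 hv),
      Set.indicator_apply, mem_coe, Pi.one_apply, mul_sub, mul_ite, mul_one, mul_zero,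
      sum_sub_distrib, sum_ite_mem, univ_inter]
    rw [← sum_add_sum_compl Z]
    ring
  · simp [tZ, laplacian_apply, hv, Set.indicator_apply, mul_ite]

lemma closure_range_tZ (m : V → V → ℕ) :
    AddSubgroup.closure (Set.range (tZ m)) = (laplacian m).range := by
  apply le_antisymm
  · rw [AddSubgroup.closure_le]
    rintro _ ⟨Z, rfl⟩
    exact ⟨_, (tZ_eq_laplacian_indicator m Z).symm⟩
  · rintro _ ⟨σ, rfl⟩
    rw [← Finset.univ_sum_single σ, map_sum]
    refine AddSubgroup.sum_mem _ fun v _ => ?_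
    have : laplacian m (Pi.single v (σ v)) = σ v • tZ m {v} := by
      rw [tZ_eq_laplacian_indicator, ← map_zsmul]
      congr 1
      ext u
      by_cases hu : u = v <;> simp [hu]
    rw [this]
    exact zsmul_mem (AddSubgroup.subset_closure (Set.mem_range_self _)) _

variable {m : V → V → ℕ}

lemma degDiv_single (v : V) (k : ℤ) : degDiv (Pi.single v k) = k :=
  sum_pi_single' v k univ |>.trans (if_pos (mem_univ v))

lemma linEquiv_iff_mem_range {d d' : V → ℤ} :
    LinEquiv m d d' ↔ d - d' ∈ (laplacian m).range := by
  rw [LinEquiv, closure_range_tZ]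

lemma LinEquiv.of_sub_eq {a b a' b' : V → ℤ} (h : LinEquiv m a b) (e : a - b = a' - b') :
    LinEquiv m a' b' := by
  rwa [LinEquiv, ← e]

lemma LinEquiv.sub {a b a' b' : V → ℤ} (h : LinEquiv m a b) (h' : LinEquiv m a' b') :
    LinEquiv m (a - a') (b - b') :=
  LinEquiv.of_sub_eq (sub_mem h h') (by abel)

lemma LinEquiv.degDiv_eq (hsymm : ∀ u v, m u v = m v u) {d d' : V → ℤ} (h : LinEquiv m d d') :
    degDiv d = degDiv d' := by
  obtain ⟨σ, hσ⟩ := linEquiv_iff_mem_range.1 h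
  have := degDiv_laplacian hsymm σ
  rw [hσ, degDiv_sub] at this
  omega

end LinearEquivalence

section Superharmonic

variable {V : Type} {m : V → V → ℕ}

lemma exists_closer_neighbor (hsymm : ∀ u v, m u v = m v u) (hconn : (assocGraph m).Connected)
    {q v : V} (hv : v ≠ q) :
    ∃ u, 0 < m v u ∧ (assocGraph m).dist u q < (assocGraph m).dist v q := by
  obtain ⟨p, hp⟩ := hconn.exists_walk_length_eq_dist v q
  cases p with
  | nil => exact absurd rfl hv
  | cons hadj p =>
    refine ⟨_, hadj.2.elim id fun h => by rwa [hsymm], ?_⟩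
    have := SimpleGraph.dist_le p
    simp only [SimpleGraph.Walk.length_cons] at hp
    omega

variable [Fintype V] [DecidableEq V]

theorem exists_superharmonic (hsymm : ∀ u v, m u v = m v u) (hconn : (assocGraph m).Connected)
    (q : V) : ∃ w : V → ℤ, (∀ v, w q ≤ w v) ∧ ∀ v ≠ q, laplacian m w v ≤ -1 := by
  set δ : V → ℕ := fun v => (assocGraph m).dist v q
  set S : ℤ := ∑ u, ∑ x, (m u x : ℤ)
  set A : ℤ := S + 2
  have hS : 0 ≤ S := by positivity
  -- A step towards `q` multiplies `|w|` by `A`, which outweighs all the other edges at `v`.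
  set w : V → ℤ := fun v => -A ^ (univ.sup δ - δ v)
  refine ⟨w, fun v => ?_, fun v hv => ?_⟩
  · simp only [w, δ, SimpleGraph.dist_self, Nat.sub_zero, neg_le_neg_iff]
    exact pow_le_pow_right₀ (by omega) (Nat.sub_le _ _)
  obtain ⟨u₀, hu₀, hcloser⟩ := exists_closer_neighbor hsymm hconn hv
  set B := A ^ (univ.sup δ - δ v)
  have hB : 0 < B := by positivity
  have hle : ∀ u, (m v u : ℤ) * (w u - w v) ≤ m v u * B := fun u => by
    have : 0 < A ^ (univ.sup δ - δ u) := by positivity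
    exact mul_le_mul_of_nonneg_left (by simp only [w]; linarith) (by positivity)
  have hu₀' : (m v u₀ : ℤ) * (w u₀ - w v) ≤ -(A - 1) * B := by
    have hδ : δ v ≤ univ.sup δ := le_sup (mem_univ v)
    have hδ₀ : δ u₀ < δ v := hcloser
    have : A * B ≤ A ^ (univ.sup δ - δ u₀) := by
      rw [← pow_succ']
      exact pow_le_pow_right₀ (by omega) (by omega)
    have hw : w u₀ - w v ≤ -(A - 1) * B := by simp only [w]; linarith
    have hm : (1 : ℤ) ≤ m v u₀ := by exact_mod_cast hu₀
    calc (m v u₀ : ℤ) * (w u₀ - w v) ≤ 1 * (w u₀ - w v) :=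
          mul_le_mul_of_nonpos_right hm (hw.trans (by nlinarith))
      _ ≤ -(A - 1) * B := by rw [one_mul]; exact hw
  have hdeg : ∑ u ∈ univ.erase u₀, (m v u : ℤ) ≤ S :=
    (sum_le_sum_of_subset_of_nonneg (erase_subset _ _) fun _ _ _ => by positivity).trans
      (single_le_sum (f := fun u => ∑ x, (m u x : ℤ)) (fun _ _ => by positivity) (mem_univ v))
  calc laplacian m w v
      = m v u₀ * (w u₀ - w v) + ∑ u ∈ univ.erase u₀, m v u * (w u - w v) :=
        (add_sum_erase _ _ (mem_univ u₀)).symm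
    _ ≤ -(A - 1) * B + ∑ u ∈ univ.erase u₀, m v u * B :=
        add_le_add hu₀' (sum_le_sum fun u _ => hle u)
    _ ≤ -(A - 1) * B + S * B := by rw [← sum_mul]; gcongr
    _ = -B := by ring
    _ ≤ -1 := by omega

end Superharmonic

section ReducedDivisors

variable {V : Type} [Fintype V] [DecidableEq V] {m : V → V → ℕ}

lemma sum_tZ_mul (hsymm : ∀ u v, m u v = m v u) (Z : Finset V) (w : V → ℤ) :
    ∑ v, tZ m Z v * w v = ∑ v ∈ Z, laplacian m w v := by
  rw [tZ_eq_laplacian_indicator, sum_laplacian_mul hsymm]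
  simp [Set.indicator_apply]

lemma exists_linEquiv_nonneg_off {q : V} {w : V → ℤ} (hw : ∀ v ≠ q, laplacian m w v ≤ -1)
    (d : V → ℤ) : ∃ d', LinEquiv m d d' ∧ ∀ v ≠ q, 0 ≤ d' v := by
  set c := ∑ v, |d v|
  refine ⟨d - laplacian m (c • w), linEquiv_iff_mem_range.2 ⟨c • w, by simp⟩,
    fun v hv => ?_⟩
  have hc : |d v| ≤ c :=
    single_le_sum (f := fun v => |d v|) (fun _ _ => abs_nonneg _) (mem_univ v)
  have : c * laplacian m w v ≤ -c := by nlinarith [hw v hv, abs_nonneg (d v)]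
  simp only [map_zsmul, Pi.sub_apply, Pi.smul_apply, smul_eq_mul]
  linarith [neg_abs_le (d v)]

/-- `q`-reduced divisors; `d + tZ m Z` is `d` after every vertex of `Z` has fired. -/
def IsReducedDivisor (m : V → V → ℕ) (q : V) (d : V → ℤ) : Prop :=
  (∀ v ≠ q, 0 ≤ d v) ∧
    ∀ Z : Finset V, Z.Nonempty → q ∉ Z → ∃ v ∈ Z, d v + tZ m Z v < 0

theorem exists_isReducedDivisor_linEquiv (hsymm : ∀ u v, m u v = m v u)
    (hconn : (assocGraph m).Connected) (q : V) (d : V → ℤ) :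
    ∃ d', IsReducedDivisor m q d' ∧ LinEquiv m d d' := by
  obtain ⟨w, hwq, hw⟩ := exists_superharmonic hsymm hconn q
  set P : (V → ℤ) → Prop := fun d' => LinEquiv m d d' ∧ ∀ v ≠ q, 0 ≤ d' v
  -- Minimise the potential `∑ v, d' v * w v` over `P`; legal firings strictly decrease it.
  have hbdd : ∀ d', P d' → degDiv d * w q ≤ ∑ v, d' v * w v := by
    rintro d' ⟨hdd', hd'⟩
    rw [hdd'.degDiv_eq hsymm, degDiv, sum_mul]
    refine sum_le_sum fun v _ => ?_
    rcases eq_or_ne v q with rfl | hv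
    · rfl
    · exact mul_le_mul_of_nonneg_left (hwq v) (hd' v hv)
  obtain ⟨_, ⟨d', hd', rfl⟩, hmin⟩ :=
    Int.exists_least_of_bdd (P := fun z => ∃ d', P d' ∧ ∑ v, d' v * w v = z)
      ⟨_, by rintro _ ⟨d', hd', rfl⟩; exact hbdd d' hd'⟩
      (by obtain ⟨d', hd'⟩ := exists_linEquiv_nonneg_off hw d; exact ⟨_, d', hd', rfl⟩)
  refine ⟨d', ⟨hd'.2, fun Z hZ hqZ => ?_⟩, hd'.1⟩
  by_contra! hfire
  have hfired : P (d' + tZ m Z) := by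
    refine ⟨LinEquiv.of_sub_eq (sub_mem hd'.1 (AddSubgroup.subset_closure
      (Set.mem_range_self Z))) (by abel), fun v hv => ?_⟩
    by_cases hvZ : v ∈ Z
    · exact hfire v hvZ
    · have : 0 ≤ tZ m Z v := by simp only [tZ, hvZ, if_false]; positivity
      exact add_nonneg (hd'.2 v hv) this
  have hdrop : ∑ v ∈ Z, laplacian m w v < 0 :=
    sum_neg (fun v hv => (hw v (ne_of_mem_of_not_mem hv hqZ)).trans_lt (by norm_num)) hZ
  have := hmin _ ⟨_, hfired, rfl⟩
  simp only [Pi.add_apply, add_mul, sum_add_distrib, sum_tZ_mul hsymm] at this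
  linarith

end ReducedDivisors

section DharBound

variable {V : Type} [Fintype V] [DecidableEq V] {m : V → V → ℕ}

def twiceEdgesMeeting (m : V → V → ℕ) (Z : Finset V) : ℤ :=
  2 * ∑ x ∈ Z, ∑ u ∈ Zᶜ, (m x u : ℤ) + ∑ x ∈ Z, ∑ u ∈ Z, (m x u : ℤ)

lemma twiceEdgesMeeting_insert (hsymm : ∀ u v, m u v = m v u) (hloop : ∀ v, m v v = 0)
    {Z : Finset V} {v : V} (hv : v ∉ Z) :
    twiceEdgesMeeting m (insert v Z) =
      twiceEdgesMeeting m Z + 2 * ∑ u ∈ (insert v Z)ᶜ, (m v u : ℤ) := by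
  have hsum : ∑ x ∈ Z, (m x v : ℤ) = ∑ u ∈ Z, (m v u : ℤ) :=
    sum_congr rfl fun x _ => by rw [hsymm]
  simp only [twiceEdgesMeeting, sum_insert hv, compl_insert, sum_erase_eq_sub (mem_compl.2 hv),
    sum_sub_distrib, sum_add_distrib, hloop, hsum]
  push_cast
  ring

lemma IsReducedDivisor.two_mul_sum_add_one_le (hsymm : ∀ u v, m u v = m v u)
    (hloop : ∀ v, m v v = 0) {q : V} {d : V → ℤ} (hd : IsReducedDivisor m q d) :
    ∀ Z : Finset V, q ∉ Z → 2 * ∑ v ∈ Z, (d v + 1) ≤ twiceEdgesMeeting m Z := by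
  intro Z
  induction Z using Finset.strongInduction with
  | H Z ih =>
  intro hqZ
  obtain rfl | hZ := Z.eq_empty_or_nonempty
  · simp [twiceEdgesMeeting]
  obtain ⟨v, hvZ, hv⟩ := hd.2 Z hZ hqZ
  have hdv : d v + 1 ≤ ∑ u ∈ Zᶜ, (m v u : ℤ) := by
    simp only [tZ, hvZ, if_true] at hv
    omega
  have := ih _ (erase_ssubset hvZ) fun h => hqZ (mem_of_mem_erase h)
  rw [← insert_erase hvZ, sum_insert (notMem_erase v Z),
    twiceEdgesMeeting_insert hsymm hloop (notMem_erase v Z), insert_erase hvZ]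
  linarith

theorem IsReducedDivisor.sum_compl_le_genus (hsymm : ∀ u v, m u v = m v u)
    (hloop : ∀ v, m v v = 0) {q : V} {d : V → ℤ} (hd : IsReducedDivisor m q d) :
    ∑ v ∈ {q}ᶜ, d v ≤ genus m := by
  have hbound := hd.two_mul_sum_add_one_le hsymm hloop {q}ᶜ (by simp)
  have hedges : twiceEdgesMeeting m {q}ᶜ = ∑ u, ∑ v, (m u v : ℤ) := by
    have := twiceEdgesMeeting_insert hsymm hloop (Z := {q}ᶜ) (v := q) (by simp)
    simpa [twiceEdgesMeeting] using this.symm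
  have hcard : 1 ≤ Fintype.card V := Fintype.card_pos_iff.2 ⟨q⟩
  rw [hedges, sum_add_distrib, sum_const, card_compl, card_singleton, nsmul_one,
    Nat.cast_sub hcard] at hbound
  rw [genus]
  omega

theorem exists_effective_linEquiv_of_genus_le (hsymm : ∀ u v, m u v = m v u)
    (hloop : ∀ v, m v v = 0) (hconn : (assocGraph m).Connected) {d : V → ℤ}
    (hd : genus m ≤ degDiv d) : ∃ f, Effective f ∧ LinEquiv m d f := by
  obtain ⟨q⟩ := hconn.nonempty
  obtain ⟨f, hf, hdf⟩ := exists_isReducedDivisor_linEquiv hsymm hconn q d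
  refine ⟨f, fun v => ?_, hdf⟩
  rcases eq_or_ne v q with rfl | hv
  · have hsplit : degDiv f = f v + ∑ u ∈ {v}ᶜ, f u := by
      rw [degDiv, ← sum_add_sum_compl {v} f, sum_singleton]
    have := hf.sum_compl_le_genus hsymm hloop
    have := hdf.degDiv_eq hsymm
    omega
  · exact hf.1 v hv

end DharBound

section OrientationDivisor

variable {V : Type} [Fintype V] {ι : Type*} [LinearOrder ι] {m : V → V → ℕ}

/-- The divisor `ν(v) = indeg(v) - 1` of the acyclic orientation in which every edge points
towards its `ρ`-larger endpoint. -/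
def orientationDivisor (m : V → V → ℕ) (ρ : V → ι) : V → ℤ := fun v =>
  ∑ u with ρ u < ρ v, (m v u : ℤ) - 1

lemma degDiv_orientationDivisor (hsymm : ∀ u v, m u v = m v u) (hloop : ∀ v, m v v = 0)
    {ρ : V → ι} (hρ : Function.Injective ρ) :
    degDiv (orientationDivisor m ρ) = genus m - 1 := by
  set P := ∑ v, ∑ u with ρ u < ρ v, (m v u : ℤ)
  have hsplit : ∀ v u, (m v u : ℤ) =
      (if ρ u < ρ v then (m v u : ℤ) else 0) + if ρ v < ρ u then (m v u : ℤ) else 0 := by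
    intro v u
    rcases lt_trichotomy (ρ u) (ρ v) with h | h | h
    · simp [h, h.not_gt]
    · simp [hρ h, hloop]
    · simp [h, h.not_gt]
  have htotal : ∑ v, ∑ u, (m v u : ℤ) = 2 * P := by
    calc ∑ v, ∑ u, (m v u : ℤ)
        = ∑ v, ∑ u, (if ρ u < ρ v then (m v u : ℤ) else 0)
          + ∑ v, ∑ u, (if ρ v < ρ u then (m v u : ℤ) else 0) := by
          simp only [← sum_add_distrib, ← hsplit]
      _ = P + P := by
          rw [sum_comm (f := fun v u => if ρ v < ρ u then (m v u : ℤ) else 0)]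
          simp only [P, sum_filter, hsymm]
      _ = 2 * P := by ring
  simp only [degDiv, orientationDivisor, sum_sub_distrib, sum_const, card_univ, nsmul_one, genus,
    htotal]
  omega

lemma not_linEquiv_orientationDivisor [DecidableEq V] [Nonempty V] (ρ : V → ι) {f : V → ℤ}
    (hf : Effective f) : ¬ LinEquiv m (orientationDivisor m ρ) f := by
  rw [linEquiv_iff_mem_range]
  rintro ⟨σ, hσ⟩
  -- At a lexicographic minimiser `v` of `(σ, ρ)`, every `ρ`-smaller vertex has larger `σ`.
  obtain ⟨v, -, hv⟩ := exists_min_image univ (fun v => toLex (σ v, ρ v)) univ_nonempty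
  have hlap : ∑ u with ρ u < ρ v, (m v u : ℤ) ≤ laplacian m σ v := by
    rw [sum_filter, laplacian_apply]
    refine sum_le_sum fun u _ => ?_
    have hvu := Prod.Lex.toLex_le_toLex.1 (hv u (mem_univ u))
    split_ifs with h
    · have : σ v < σ u := hvu.resolve_right fun h' => h.not_ge h'.2
      nlinarith
    · have : σ v ≤ σ u := hvu.elim le_of_lt fun h' => h'.1.le
      nlinarith
  have := congrFun hσ v
  have := hf v
  simp only [orientationDivisor, Pi.sub_apply] at *
  omega

end OrientationDivisor

section Rank

variable {V : Type} [Fintype V] [DecidableEq V] {m : V → V → ℕ} {d : V → ℤ}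

lemma genus_nonneg (hsymm : ∀ u v, m u v = m v u) (hloop : ∀ v, m v v = 0)
    (hconn : (assocGraph m).Connected) : 0 ≤ genus m := by
  obtain ⟨q⟩ := hconn.nonempty
  by_contra! hg
  obtain ⟨f, hf, hlin⟩ := exists_effective_linEquiv_of_genus_le hsymm hloop hconn
    (d := Pi.single q (-1)) (by rw [degDiv_single]; omega)
  have := hlin.degDiv_eq hsymm
  have : 0 ≤ degDiv f := sum_nonneg fun v _ => hf v
  rw [degDiv_single] at *
  omega

lemma mem_bnRankSet_of_le [Nonempty V] {k k' : ℤ} (hk : k ∈ bnRankSet m d) (hk' : 0 ≤ k')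
    (hle : k' ≤ k) : k' ∈ bnRankSet m d := by
  obtain rfl | ⟨-, hk⟩ := hk
  · omega
  refine Or.inr ⟨hk', fun e he hdeg => ?_⟩
  obtain ⟨v⟩ := ‹Nonempty V›
  set c : V → ℤ := Pi.single v (k - k')
  have hc : Effective c := fun u => by
    rcases eq_or_ne u v with rfl | hu
    · simp [c, hle]
    · simp [c, hu]
  obtain ⟨f, hf, hlin⟩ := hk (e + c) (fun u => add_nonneg (he u) (hc u))
    (by rw [degDiv_add, degDiv_single]; omega)
  exact ⟨f + c, fun u => add_nonneg (hf u) (hc u), hlin.of_sub_eq (by abel)⟩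

lemma mem_bnRankSet_of_genus_add_le (hsymm : ∀ u v, m u v = m v u) (hloop : ∀ v, m v v = 0)
    (hconn : (assocGraph m).Connected) {k : ℤ} (hk : -1 ≤ k) (h : genus m + k ≤ degDiv d) :
    k ∈ bnRankSet m d := by
  rcases hk.eq_or_lt with rfl | hk
  · exact Or.inl rfl
  refine Or.inr ⟨by omega, fun e _ he => ?_⟩
  exact exists_effective_linEquiv_of_genus_le hsymm hloop hconn (by rw [degDiv_sub]; omega)

lemma sub_genus_add_one_notMem_bnRankSet (hsymm : ∀ u v, m u v = m v u) (hloop : ∀ v, m v v = 0)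
    (hconn : (assocGraph m).Connected) (hdeg : 2 * genus m - 2 < degDiv d) :
    degDiv d - genus m + 1 ∉ bnRankSet m d := by
  have : Nonempty V := hconn.nonempty
  set ν := orientationDivisor m (Fintype.equivFin V)
  have hν : degDiv ν = genus m - 1 :=
    degDiv_orientationDivisor hsymm hloop (Fintype.equivFin V).injective
  have hg := genus_nonneg hsymm hloop hconn
  obtain ⟨c, hc, hdc⟩ := exists_effective_linEquiv_of_genus_le hsymm hloop hconn (d := d - ν)
    (by rw [degDiv_sub]; omega)
  rintro (h | ⟨-, h⟩)
  · omega
  obtain ⟨f, hf, hcf⟩ := h c hc (by rw [← hdc.degDiv_eq hsymm, degDiv_sub]; omega)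
  exact not_linEquiv_orientationDivisor _ hf ((hcf.sub hdc).of_sub_eq (by abel))

end Rank

/-- A divisor of degree greater than `2g - 2` has rank `deg(d) - g`. -/
theorem bnRank_degree_large {V : Type} [Fintype V] [DecidableEq V]
    (m : V → V → ℕ) (hsymm : ∀ u v, m u v = m v u) (hloop : ∀ v, m v v = 0)
    (hconn : (assocGraph m).Connected)
    (d : V → ℤ) (hdeg : 2 * genus m - 2 < degDiv d) :
    bnRank m d = degDiv d - genus m := by
  have : Nonempty V := hconn.nonempty
  have hg := genus_nonneg hsymm hloop hconn
  refine IsGreatest.csSup_eq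
    ⟨mem_bnRankSet_of_genus_add_le hsymm hloop hconn (by omega) (by omega), fun k hk => ?_⟩
  by_contra! hlt
  exact sub_genus_add_one_notMem_bnRankSet hsymm hloop hconn hdeg
    (mem_bnRankSet_of_le hk (by omega) hlt)
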